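/- For any formal Fourier series f (i.e., any function \hat{f}: ℤ → ℂ), the subspace of radial vectors ℂ_rad^{B_n(T_q)} ⊂ ℂ^{B_n(T_q)} is invariant under the truncated branching-Toeplitz operator Γ_q^{(n)}[f], and with respect to the orthonormal basis h_k = 1_{S_k}/√(q^k), k = 0, ..., n, the restriction of Γ_q^{(n)}[f] to ℂ_rad^{B_n(T_q)} has matrix representation equal to the standard Toeplitz matrix T_n(f) = [\hat{f}(k - l)]_{0 ≤ k,l ≤ n}. In particular, Γ_q^{(n)}[f] h_l = Σ_{k=0}^n \hat{f}(k - l) h_k. -/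

import Mathlib

/-- Vertices of the rooted `q`-homogeneous tree, modelled as words over `Fin q`;
the root is the empty word and the children of `w` are the words `k :: w`. -/
abbrev Vertex (q : ℕ) := List (Fin q)

/-- `σ` is an ancestor of `τ` (i.e. `σ ⪯ τ`): `τ = w ++ σ` for some word `w`. -/
def Anc {q : ℕ} (σ τ : Vertex q) : Prop := σ <:+ τ

/-- Two vertices are comparable (`(σ,τ) ∈ 𝒞`) if one is an ancestor of the other. -/
def Comp {q : ℕ} (σ τ : Vertex q) : Prop := σ <:+ τ ∨ τ <:+ σ

/-- Length of the longest common suffix, i.e. the generation of the last common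
ancestor of the two vertices. -/
def lcs {q : ℕ} (σ τ : Vertex q) : ℕ :=
  ((σ.reverse.zip τ.reverse).takeWhile (fun p => decide (p.1 = p.2))).length

/-- The graph distance on the rooted `q`-homogeneous tree. -/
def tdist {q : ℕ} (σ τ : Vertex q) : ℕ := (σ.length - lcs σ τ) + (τ.length - lcs σ τ)

instance {q : ℕ} (σ τ : Vertex q) : Decidable (Comp σ τ) :=
  inferInstanceAs (Decidable (σ <:+ τ ∨ τ <:+ σ))

/-- The branching-Toeplitz kernel
`Γ_q[f](σ₁,σ₂) = q^{-d(σ₁,σ₂)/2} · f̂(|σ₁|-|σ₂|) · 1_𝒞(σ₁,σ₂)` associated with a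
formal Fourier series with coefficients `f̂ : ℤ → ℂ`. -/
noncomputable def btKer {q : ℕ} (f : ℤ → ℂ) (σ₁ σ₂ : Vertex q) : ℂ :=
  if Comp σ₁ σ₂ then
    ((q : ℝ) ^ (-(tdist σ₁ σ₂ : ℝ) / 2) : ℝ) * f ((σ₁.length : ℤ) - σ₂.length) else 0

/-- The ball `B_n(T_q)` of vertices of generation at most `n`. -/
abbrev Ball (q n : ℕ) := {σ : Vertex q // σ.length ≤ n}

noncomputable instance (q n : ℕ) : Fintype (Ball q n) :=
  (List.finite_length_le (Fin q) n).fintype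

/-- The truncated branching-Toeplitz matrix `Γ_q^{(n)}[f]` on `B_n(T_q)`. -/
noncomputable def btMat (q n : ℕ) (f : ℤ → ℂ) : Matrix (Ball q n) (Ball q n) ℂ :=
  fun σ₁ σ₂ => btKer f σ₁.1 σ₂.1

/-- The standard Toeplitz matrix `T_n(f) = [f̂(k-l)]_{0 ≤ k,l ≤ n}`. -/
def toepMat (n : ℕ) (f : ℤ → ℂ) : Matrix (Fin (n + 1)) (Fin (n + 1)) ℂ :=
  fun k l => f ((k : ℤ) - (l : ℤ))

/-- The orthonormal radial vectors `h_k = 1_{S_k} / √(q^k)` in `ℂ^{B_n(T_q)}`. -/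
noncomputable def radBasis (q n : ℕ) (k : ℕ) : Ball q n → ℂ :=
  fun σ => if σ.1.length = k then ((Real.sqrt ((q : ℝ) ^ k))⁻¹ : ℝ) else 0

/-! For a vertex `σ` of generation `m`, the vertices of generation `l` comparable with `σ` are its
`q ^ (l - m)` descendants if `l ≥ m` and its single ancestor if `l ≤ m`, all at distance `|l - m|`.
So `Γ_q^{(n)}[f]` maps the indicator of `S_l` to the function `σ ↦ q^{(l-m)/2} f̂(m - l)`, which
depends on `σ` only through `m = |σ|`; normalising by `√(q^l)` and `√(q^m)` leaves `f̂(m - l)`. -/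

open Finset

lemma List.length_takeWhile_zip_of_prefix {α : Type*} [DecidableEq α] {a b : List α}
    (h : a <+: b) : ((a.zip b).takeWhile fun p => decide (p.1 = p.2)).length = a.length := by
  obtain ⟨c, rfl⟩ := h
  induction a with
  | nil => simp
  | cons x a ih => simpa [List.takeWhile_cons] using ih

lemma List.length_takeWhile_zip_of_prefix' {α : Type*} [DecidableEq α] {a b : List α}
    (h : a <+: b) : ((b.zip a).takeWhile fun p => decide (p.1 = p.2)).length = a.length := by
  obtain ⟨c, rfl⟩ := h
  induction a with
  | nil => simp
  | cons x a ih => simpa [List.takeWhile_cons] using ih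

section

variable {q : ℕ}

lemma tdist_of_comp {σ τ : Vertex q} (h : Comp σ τ) :
    tdist σ τ = σ.length - τ.length + (τ.length - σ.length) := by
  rcases h with h | h
  · have := h.length_le
    rw [tdist, lcs, List.length_takeWhile_zip_of_prefix (List.reverse_prefix.mpr h)]
    simp only [List.length_reverse]; omega
  · have := h.length_le
    rw [tdist, lcs, List.length_takeWhile_zip_of_prefix' (List.reverse_prefix.mpr h)]
    simp only [List.length_reverse]; omega

/-- For `l ≤ |σ|` the word `w` is empty and `τ` is the ancestor of `σ` in generation `l`;
for `l ≥ |σ|` the `drop` is trivial and `τ = w ++ σ` ranges over the descendants. -/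
lemma length_eq_and_comp_iff {σ τ : Vertex q} {l : ℕ} :
    τ.length = l ∧ Comp σ τ ↔
      ∃ w : Vertex q, w.length = l - σ.length ∧ τ = w ++ σ.drop (σ.length - l) := by
  constructor
  · rintro ⟨rfl, h | ⟨u, rfl⟩⟩
    · obtain ⟨u, rfl⟩ := h
      exact ⟨u, by simp, by simp⟩
    · exact ⟨[], by simp, by simp⟩
  · rintro ⟨w, hw, rfl⟩
    rcases le_total l σ.length with hl | hl
    · obtain rfl : w = [] := List.length_eq_zero_iff.mp (by omega)
      exact ⟨by simp only [List.nil_append, List.length_drop]; omega, Or.inr (List.drop_suffix _ _)⟩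
    · rw [Nat.sub_eq_zero_of_le hl, List.drop_zero]
      exact ⟨by simp only [List.length_append]; omega, Or.inl (List.suffix_append _ _)⟩

lemma Real.pow_sub_mul_rpow_neg_dist_div_two {x : ℝ} (hx : 0 < x) (l m : ℕ) :
    x ^ (l - m) * x ^ (-((m - l + (l - m) : ℕ) : ℝ) / 2) = x ^ (((l : ℝ) - m) / 2) := by
  rw [← Real.rpow_natCast, ← Real.rpow_add hx]
  congr 1
  rcases le_total l m with h | h
  · rw [Nat.sub_eq_zero_of_le h]; push_cast [h]; ring
  · rw [Nat.sub_eq_zero_of_le h]; push_cast [h]; ring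

lemma Real.rpow_sub_div_two_mul_inv_sqrt_pow {x : ℝ} (hx : 0 < x) (l m : ℕ) :
    x ^ (((l : ℝ) - m) / 2) * (√(x ^ l))⁻¹ = (√(x ^ m))⁻¹ := by
  rw [Real.sqrt_eq_rpow, Real.sqrt_eq_rpow, ← Real.rpow_natCast x l, ← Real.rpow_natCast x m,
    ← Real.rpow_mul hx.le, ← Real.rpow_mul hx.le, ← Real.rpow_neg hx.le, ← Real.rpow_neg hx.le,
    ← Real.rpow_add hx]
  ring_nf

lemma card_filter_comp_length_eq (σ : Vertex q) {n l : ℕ} (hl : l ≤ n) :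
    #{τ : Ball q n | τ.1.length = l ∧ Comp σ τ.1} = q ^ (l - σ.length) := by
  let embed (w : List.Vector (Fin q) (l - σ.length)) : Ball q n :=
    ⟨w.1 ++ σ.drop (σ.length - l), by simp only [List.length_append, w.2, List.length_drop]; omega⟩
  have hfilter : ({τ : Ball q n | τ.1.length = l ∧ Comp σ τ.1} : Finset _) = univ.image embed := by
    ext τ
    simp only [mem_filter, mem_univ, true_and, mem_image, length_eq_and_comp_iff]
    constructor
    · rintro ⟨w, hw, hτ⟩
      exact ⟨⟨w, hw⟩, Subtype.ext hτ.symm⟩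
    · rintro ⟨w, rfl⟩
      exact ⟨w.1, w.2, rfl⟩
  have hinj : Function.Injective embed := fun v w h =>
    Subtype.ext (List.append_cancel_right (congrArg Subtype.val h))
  rw [hfilter, card_image_of_injective _ hinj, card_univ, card_vector, Fintype.card_fin]

lemma sum_btKer_length_eq (hq : 0 < q) (f : ℤ → ℂ) (σ : Vertex q) {n l : ℕ} (hl : l ≤ n) :
    ∑ τ : Ball q n with τ.1.length = l, btKer f σ τ.1 =
      ((q : ℝ) ^ (((l : ℝ) - σ.length) / 2) : ℝ) * f (σ.length - l) := by
  set c : ℂ := ((q : ℝ) ^ (-((σ.length - l + (l - σ.length) : ℕ) : ℝ) / 2) : ℝ) *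
    f (σ.length - l) with hc
  have hker : ∀ τ ∈ ({τ : Ball q n | τ.1.length = l} : Finset _),
      btKer f σ τ.1 = if Comp σ τ.1 then c else 0 := by
    intro τ hτ
    unfold btKer
    split_ifs with h
    · rw [tdist_of_comp h, (mem_filter.mp hτ).2]
    · rfl
  rw [sum_congr rfl hker, sum_ite, sum_const_zero, add_zero, sum_const, filter_filter,
    card_filter_comp_length_eq σ hl, nsmul_eq_mul, hc, ← mul_assoc]
  congr 1
  rw [← Real.pow_sub_mul_rpow_neg_dist_div_two (Nat.cast_pos.mpr hq) l σ.length]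
  push_cast
  ring

lemma mulVec_btMat_of_radial (hq : 0 < q) (n : ℕ) (f : ℤ → ℂ) {v : Ball q n → ℂ} (g : ℕ → ℂ)
    (hv : ∀ τ, v τ = g τ.1.length) (σ : Ball q n) :
    (btMat q n f).mulVec v σ = ∑ l ∈ range (n + 1),
      ((q : ℝ) ^ (((l : ℝ) - σ.1.length) / 2) : ℝ) * f (σ.1.length - l) * g l := by
  have hlevel : ∀ τ ∈ (univ : Finset (Ball q n)), τ.1.length ∈ range (n + 1) :=
    fun τ _ => mem_range_succ_iff.mpr τ.2
  simp only [Matrix.mulVec, dotProduct]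
  rw [← sum_fiberwise_of_maps_to hlevel]
  refine sum_congr rfl fun l hl => ?_
  rw [← sum_btKer_length_eq hq f σ.1 (mem_range_succ_iff.mp hl), sum_mul]
  refine sum_congr rfl fun τ hτ => ?_
  rw [btMat, hv, (mem_filter.mp hτ).2]

end

theorem btMat_radial_general (q n : ℕ) (hq : 2 ≤ q) (f : ℤ → ℂ) :
    (∀ v : Ball q n → ℂ,
      (∀ σ τ : Ball q n, σ.1.length = τ.1.length → v σ = v τ) →
      ∀ σ τ : Ball q n, σ.1.length = τ.1.length →
        (btMat q n f).mulVec v σ = (btMat q n f).mulVec v τ) ∧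
    (∀ l : ℕ, l ≤ n →
      (btMat q n f).mulVec (radBasis q n l) =
        ∑ k ∈ Finset.range (n + 1), f ((k : ℤ) - (l : ℤ)) • radBasis q n k) := by
  replace hq : 0 < q := by omega
  refine ⟨fun v hv σ τ hστ => ?_, fun l hl => funext fun σ => ?_⟩
  · have hfactor : Function.FactorsThrough v fun τ : Ball q n => τ.1.length := hv
    have hv' (τ : Ball q n) := (hfactor.extend_apply 0 τ).symm
    rw [mulVec_btMat_of_radial hq n f _ hv' σ, mulVec_btMat_of_radial hq n f _ hv' τ, hστ]
  · rw [mulVec_btMat_of_radial hq n f (v := radBasis q n l)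
      (fun k => if k = l then ((√((q : ℝ) ^ l))⁻¹ : ℝ) else 0) (fun _ => rfl) σ, Finset.sum_apply]
    simp only [mul_ite, mul_zero, sum_ite_eq, sum_ite_eq', mem_range_succ_iff.mpr hl,
      mem_range_succ_iff.mpr σ.2, if_true, Pi.smul_apply, radBasis, smul_eq_mul]
    rw [mul_right_comm, ← Complex.ofReal_mul,
      Real.rpow_sub_div_two_mul_inv_sqrt_pow (Nat.cast_pos.mpr hq), mul_comm]

/-- The radial subspace of `ℂ^{B_n(T_q)}` is invariant under the
truncated branching-Toeplitz operator `Γ_q^{(n)}[f]`, and in the orthonormal basis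
`h_0, …, h_n` its restriction is the Toeplitz matrix `T_n(f)`; explicitly
`Γ_q^{(n)}[f] h_l = Σ_{k=0}^n f̂(k-l) h_k`. -/
theorem btMat_radial (q n : ℕ) (hq : 2 ≤ q) (hn : 1 ≤ n) (f : ℤ → ℂ) :
    (∀ v : Ball q n → ℂ,
      (∀ σ τ : Ball q n, σ.1.length = τ.1.length → v σ = v τ) →
      ∀ σ τ : Ball q n, σ.1.length = τ.1.length →
        (btMat q n f).mulVec v σ = (btMat q n f).mulVec v τ) ∧
    (∀ l : ℕ, l ≤ n →
      (btMat q n f).mulVec (radBasis q n l) =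
        ∑ k ∈ Finset.range (n + 1), f ((k : ℤ) - (l : ℤ)) • radBasis q n k) :=
  btMat_radial_general q n hq f
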